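/- arXiv:0909.3138 — 2 statements merged into one kernel-verified Lean document; each statement's English description precedes it below -/
import Mathlib

section
/- Let G be a finite connected simple graph with at least two vertices and w an injective real-valued edge weight function. Then the maximum edge weight occurring in the minimal spanning tree MST(G,w) is less than or equal to the maximum edge weight occurring in any other spanning tree of G; that is, the minimal spanning tree is also a minimum-bottleneck spanning tree. -/
open scoped BigOperators symmDiff

variable {V : Type*}

/-- The total weight of (the edges of) a graph `T`, for a weight function `w` on `Sym2 V`. -/
noncomputable def edgeWeight (w : Sym2 V → ℝ) (T : SimpleGraph V) : ℝ :=
  ∑ᶠ e ∈ T.edgeSet, w e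

/-- `T` is a spanning tree of `G`: a subgraph of `G` (on the same, full vertex set)
that is connected and acyclic. -/
def IsSpanningTree (G T : SimpleGraph V) : Prop := T ≤ G ∧ T.IsTree

/-- `T` is a minimal spanning tree of `G` with respect to the weights `w`. -/
def IsMST (G : SimpleGraph V) (w : Sym2 V → ℝ) (T : SimpleGraph V) : Prop :=
  IsSpanningTree G T ∧
    ∀ T' : SimpleGraph V, IsSpanningTree G T' → edgeWeight w T ≤ edgeWeight w T'

/-!
Removing an edge `e = uv` of the MST `T` splits `T` into two components, and a path from `u`
to `v` in `T'` has an edge `f` joining them. Then `T - e + f` is again a spanning tree, so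
minimality of `T` gives `w e ≤ w f`: every edge of `T` is dominated by an edge of `T'`.
-/

namespace SimpleGraph

variable {H : SimpleGraph V}

theorem Reachable.deleteEdges_reachable_or {x u v : V} (h : H.Reachable x u) :
    (H.deleteEdges {s(u, v)}).Reachable x u ∨ (H.deleteEdges {s(u, v)}).Reachable x v := by
  obtain ⟨p⟩ := h
  induction p with
  | nil => exact Or.inl .rfl
  | @cons x y u hxy _ ih =>
    by_cases he : s(x, y) = s(u, v)
    · rcases Sym2.eq_iff.mp he with ⟨rfl, rfl⟩ | ⟨rfl, rfl⟩ <;> simp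
    · have hdel : (H.deleteEdges {s(u, v)}).Adj x y := by
        rw [deleteEdges_adj]
        exact ⟨hxy, he⟩
      exact ih.imp hdel.reachable.trans hdel.reachable.trans

theorem IsTree.deleteEdges_sup_edge {u v a b : V} (hH : H.IsTree)
    (ha : (H.deleteEdges {s(u, v)}).Reachable a u)
    (hb : ¬ (H.deleteEdges {s(u, v)}).Reachable b u) :
    (H.deleteEdges {s(u, v)} ⊔ edge a b).IsTree := by
  set D := H.deleteEdges {s(u, v)}
  have hab : ¬ D.Reachable a b := fun h => hb (h.symm.trans ha)
  refine ⟨?_, (hH.isAcyclic.anti (deleteEdges_le _)).sup_edge_of_not_reachable hab⟩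
  have hbv : D.Reachable b v :=
    (hH.connected.preconnected b u).deleteEdges_reachable_or.resolve_left hb
  have hba : (D ⊔ edge a b).Adj b a := Or.inr <| (edge_adj ..).mpr
    ⟨Or.inr ⟨rfl, rfl⟩, fun h => hab (h ▸ .rfl)⟩
  have hvu : (D ⊔ edge a b).Reachable v u :=
    (hbv.symm.mono le_sup_left).trans (hba.reachable.trans (ha.mono le_sup_left))
  have hreach : ∀ x, (D ⊔ edge a b).Reachable x u := fun x =>
    ((hH.connected.preconnected x u).deleteEdges_reachable_or (v := v)).elim
      (fun h => h.mono le_sup_left) (fun h => (h.mono le_sup_left).trans hvu)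
  have := hH.connected.nonempty
  exact Connected.mk fun x y => (hreach x).trans (hreach y).symm

end SimpleGraph

open SimpleGraph

section edgeWeight

variable [Finite V] (w : Sym2 V → ℝ) {H : SimpleGraph V}

theorem edgeWeight_sup_edge {a b : V} (hab : a ≠ b) (hn : ¬ H.Adj a b) :
    edgeWeight w (H ⊔ edge a b) = w s(a, b) + edgeWeight w H := by
  rw [edgeWeight, edgeSet_sup, edgeSet_edge_of_ne hab, Set.union_singleton,
    finsum_mem_insert _ (show s(a, b) ∉ H.edgeSet from hn) H.edgeSet.toFinite, edgeWeight]

theorem edgeWeight_deleteEdges_singleton {e : Sym2 V} (he : e ∈ H.edgeSet) :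
    w e + edgeWeight w (H.deleteEdges {e}) = edgeWeight w H := by
  rw [edgeWeight, edgeWeight, edgeSet_deleteEdges,
    ← finsum_mem_insert _ (fun h => h.2 rfl) (H.edgeSet \ {e}).toFinite,
    Set.insert_sdiff_singleton, Set.insert_eq_of_mem he]

end edgeWeight

namespace IsMST

variable [Finite V] {G T : SimpleGraph V} {w : Sym2 V → ℝ}

theorem weight_le_of_adj_of_not_reachable {u v a b : V} (hT : IsMST G w T) (huv : T.Adj u v)
    (hab : G.Adj a b) (ha : (T.deleteEdges {s(u, v)}).Reachable a u)
    (hb : ¬ (T.deleteEdges {s(u, v)}).Reachable b u) : w s(u, v) ≤ w s(a, b) := by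
  set D := T.deleteEdges {s(u, v)}
  have hexchange : IsSpanningTree G (D ⊔ edge a b) :=
    ⟨sup_le ((deleteEdges_le _).trans hT.1.1) ((edge_le_iff (G := G)).mpr (Or.inr hab)),
      hT.1.2.deleteEdges_sup_edge ha hb⟩
  have hD : ¬ D.Adj a b := fun h => hb (h.symm.reachable.trans ha)
  have hweight := hT.2 _ hexchange
  rw [edgeWeight_sup_edge w hab.ne hD,
    ← edgeWeight_deleteEdges_singleton w (e := s(u, v)) huv] at hweight
  linarith

theorem exists_mem_edgeSet_weight_le {T' : SimpleGraph V} (hT : IsMST G w T)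
    (hT' : IsSpanningTree G T') {e : Sym2 V} (he : e ∈ T.edgeSet) : ∃ f ∈ T'.edgeSet, w e ≤ w f := by
  induction e using Sym2.ind with
  | h u v =>
    have hbridge : ¬ (T.deleteEdges {s(u, v)}).Reachable v u := fun h =>
      isAcyclic_iff_forall_adj_isBridge.mp hT.1.2.isAcyclic he h.symm
    obtain ⟨p⟩ := hT'.2.connected.preconnected u v
    obtain ⟨d, -, ha, hb⟩ :=
      p.exists_boundary_dart {x | (T.deleteEdges {s(u, v)}).Reachable x u} .rfl hbridge
    exact ⟨s(d.fst, d.snd), d.adj,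
      hT.weight_le_of_adj_of_not_reachable he (hT'.1 d.adj) ha hb⟩

end IsMST

theorem mst_is_min_bottleneck_general [Fintype V] (hcard : 1 < Fintype.card V)
    (G : SimpleGraph V)
    (w : Sym2 V → ℝ)
    (T : SimpleGraph V) (hT : IsMST G w T)
    (T' : SimpleGraph V) (hT' : IsSpanningTree G T') :
    sSup (w '' T.edgeSet) ≤ sSup (w '' T'.edgeSet) := by
  have : Nontrivial V := Fintype.one_lt_card_iff_nontrivial.mp hcard
  obtain ⟨u⟩ := (inferInstance : Nonempty V)
  obtain ⟨v, hv⟩ := hT.1.2.connected.preconnected.exists_adj_of_nontrivial u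
  refine csSup_le ⟨_, Set.mem_image_of_mem w (show s(_, v) ∈ T.edgeSet from hv)⟩ ?_
  rintro _ ⟨e, he, rfl⟩
  obtain ⟨f, hf, hef⟩ := hT.exists_mem_edgeSet_weight_le hT' he
  exact hef.trans (le_csSup (T'.edgeSet.toFinite.image w).bddAbove (Set.mem_image_of_mem w hf))

/-- the MST is a minimum-bottleneck spanning tree: its maximum edge weight
is at most the maximum edge weight of any other spanning tree. -/
theorem mst_is_min_bottleneck [Fintype V] (hcard : 1 < Fintype.card V)
    (G : SimpleGraph V) (hG : G.Connected)
    (w : Sym2 V → ℝ) (hw : Set.InjOn w G.edgeSet)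
    (T : SimpleGraph V) (hT : IsMST G w T)
    (T' : SimpleGraph V) (hT' : IsSpanningTree G T') :
    sSup (w '' T.edgeSet) ≤ sSup (w '' T'.edgeSet) :=
  mst_is_min_bottleneck_general hcard G w T hT T' hT'
end

section
/- Let G be a finite connected simple graph and w an injective real-valued edge weight function. The set T* of edges e = {x,y} of G such that x and y are not connected in the subgraph of G consisting of the edges of weight strictly less than w(e) is a spanning tree of G, and for every spanning tree T' of G with T' ≠ T*, the total weight of T* is strictly less than the total weight of T'. -/
open scoped BigOperators symmDiff

variable {V : Type*}

/-- The graph `T*` whose edges are the edges `e = {x,y}` of `G` such that `x` and `y`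
are not connected using only edges of `G` of weight strictly less than `w e`. -/
def TstarGraph (G : SimpleGraph V) (w : Sym2 V → ℝ) : SimpleGraph V :=
  SimpleGraph.fromEdgeSet
    {e | e ∈ G.edgeSet ∧ ∀ x y : V, e = s(x, y) →
      ¬ (SimpleGraph.fromEdgeSet {f | f ∈ G.edgeSet ∧ w f < w e}).Reachable x y}

/-!
`T*` is the tree built by Kruskal's algorithm. By induction on the weight of an edge `xy` of `G`,
`x` and `y` are joined in `T*`: either `xy ∈ T*`, or `x` and `y` are joined by lighter edges,
whose endpoints are joined in `T*`. The heaviest edge of a cycle has its endpoints joined by the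
other, lighter, edges of the cycle, so it is not in `T*`; hence `T*` is acyclic.

A minimum spanning tree exists since there are finitely many spanning trees. If one, `T`, differed
from `T*`, some edge `f = xy` of `T*` would be missing from `T`. The path from `x` to `y` in `T`
contains an edge `e` heavier than `f`, as otherwise `x` and `y` would be joined by edges lighter
than `f`. Exchanging `e` for `f` gives a lighter spanning tree. So `T*` is the unique minimum
spanning tree.
-/

namespace SimpleGraph

lemma Reachable.of_forall_adj_reachable {G H : SimpleGraph V}
    (h : ∀ ⦃x y⦄, G.Adj x y → H.Reachable x y) {u v : V} (huv : G.Reachable u v) :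
    H.Reachable u v := by
  obtain ⟨p⟩ := huv
  induction p with
  | nil => rfl
  | cons hadj _ ih => exact (h hadj).trans ih

lemma Connected.of_forall_adj_reachable {G H : SimpleGraph V} (hG : G.Connected)
    (h : ∀ ⦃x y⦄, G.Adj x y → H.Reachable x y) : H.Connected :=
  have := hG.nonempty
  ⟨fun u v => (hG.preconnected u v).of_forall_adj_reachable h⟩

lemma Walk.IsCycle.reachable_of_mem_edges {G H : SimpleGraph V} {u a b : V} {c : G.Walk u u}
    (hc : c.IsCycle) (hab : s(a, b) ∈ c.edges)
    (hH : ∀ e ∈ c.edges, e ≠ s(a, b) → e ∈ H.edgeSet) : H.Reachable a b := by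
  have hcK : ∀ e ∈ c.edges, e ∈ (H ⊔ edge a b).edgeSet := fun e he => by
    rw [edgeSet_sup, edgeSet_edge_of_ne (c.adj_of_mem_edges hab).ne]
    by_cases h : e = s(a, b)
    · exact Or.inr h
    · exact Or.inl (hH e he h)
  have hcycle := adj_and_reachable_delete_edges_iff_exists_cycle.2
    ⟨u, c.transfer _ hcK, hc.transfer hcK, by rwa [Walk.edges_transfer]⟩
  refine hcycle.2.mono fun x y hxy => ?_
  rw [deleteEdges_adj, sup_adj, adj_edge] at hxy
  obtain ⟨hH | ⟨hab', -⟩, hne⟩ := hxy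
  · exact hH
  · exact absurd hab'.symm hne

lemma IsTree.eq_of_le {H T : SimpleGraph V} (hH : H.IsTree) (hT : T.IsTree) (hle : H ≤ T) :
    H = T :=
  (isTree_iff_maximal_isAcyclic.1 hH).2.eq_of_le hT.isAcyclic hle

lemma edgeSet_deleteEdges_sup_edge {T : SimpleGraph V} {e : Sym2 V} {x y : V} (hxy : x ≠ y) :
    (T.deleteEdges {e} ⊔ edge x y).edgeSet = insert s(x, y) (T.edgeSet \ {e}) := by
  rw [edgeSet_sup, edgeSet_deleteEdges, edgeSet_edge_of_ne hxy, Set.union_singleton]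

lemma IsTree.deleteEdges_sup_edge_s11 [Finite V] {T : SimpleGraph V} (hT : T.IsTree) {x y : V}
    {p : T.Walk x y} (hp : p.IsPath) (hxy : ¬ T.Adj x y) (hne : x ≠ y) {e : Sym2 V}
    (he : e ∈ p.edges) : (T.deleteEdges {e} ⊔ edge x y).IsTree := by
  have hcycle : (Walk.cons ((top_adj _ _).2 hne.symm) (p.mapLe le_top)).IsCycle := by
    rw [Walk.cons_isCycle_iff, Walk.isPath_mapLe, Walk.edges_mapLe_eq_edges, Sym2.eq_swap]
    exact ⟨hp, fun h => hxy (p.adj_of_mem_edges h)⟩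
  refine isTree_iff_connected_and_card.2
    ⟨hT.connected.of_forall_adj_reachable fun u v huv => ?_, ?_⟩
  · by_cases huv' : s(u, v) = e
    · subst huv'
      refine hcycle.reachable_of_mem_edges (by simp [he]) fun f hf hfe => ?_
      rw [edgeSet_deleteEdges_sup_edge hne]
      rw [Walk.edges_cons, Walk.edges_mapLe_eq_edges, List.mem_cons, Sym2.eq_swap] at hf
      rcases hf with rfl | hf
      · exact Set.mem_insert _ _
      · exact Set.mem_insert_of_mem _ ⟨p.edges_subset_edgeSet hf, hfe⟩
    · exact Adj.reachable (Or.inl (deleteEdges_adj.2 ⟨huv, huv'⟩))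
  · rw [← (isTree_iff_connected_and_card.1 hT).2, Nat.card_coe_set_eq, Nat.card_coe_set_eq,
      edgeSet_deleteEdges_sup_edge hne, Set.ncard_insert_of_notMem fun h => hxy h.1,
      Set.ncard_sdiff_singleton_add_one (p.edges_subset_edgeSet he)]

variable {G : SimpleGraph V} {w : Sym2 V → ℝ}

def lighterSubgraph (G : SimpleGraph V) (w : Sym2 V → ℝ) (t : ℝ) : SimpleGraph V :=
  fromEdgeSet {f | f ∈ G.edgeSet ∧ w f < t}

lemma mem_edgeSet_lighterSubgraph {t : ℝ} {e : Sym2 V} :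
    e ∈ (G.lighterSubgraph w t).edgeSet ↔ e ∈ G.edgeSet ∧ w e < t := by
  rw [lighterSubgraph, edgeSet_fromEdgeSet]
  exact ⟨fun h => h.1, fun h => ⟨h, G.not_isDiag_of_mem_edgeSet h.1⟩⟩

lemma lighterSubgraph_adj {t : ℝ} {x y : V} :
    (G.lighterSubgraph w t).Adj x y ↔ G.Adj x y ∧ w s(x, y) < t := by
  rw [← mem_edgeSet, mem_edgeSet_lighterSubgraph, mem_edgeSet]

lemma Walk.exists_mem_edges_le_of_not_reachable_lighterSubgraph {H : SimpleGraph V}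
    (hHG : H ≤ G) {t : ℝ} {x y : V} (p : H.Walk x y)
    (hxy : ¬ (G.lighterSubgraph w t).Reachable x y) : ∃ e ∈ p.edges, t ≤ w e := by
  by_contra! h
  exact hxy ⟨p.transfer _ fun e he =>
    mem_edgeSet_lighterSubgraph.2 ⟨edgeSet_mono hHG (p.edges_subset_edgeSet he), h e he⟩⟩

end SimpleGraph

open SimpleGraph

lemma edgeWeight_deleteEdges_sup_edge [Finite V] (w : Sym2 V → ℝ) {T : SimpleGraph V}
    {e : Sym2 V} (he : e ∈ T.edgeSet) {x y : V} (hxy : ¬ T.Adj x y) (hne : x ≠ y) :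
    edgeWeight w (T.deleteEdges {e} ⊔ edge x y) + w e = edgeWeight w T + w s(x, y) := by
  have hsplit : edgeWeight w T = w e + ∑ᶠ f ∈ T.edgeSet \ {e}, w f := by
    rw [edgeWeight, ← finsum_mem_insert w (fun h => h.2 rfl) (Set.toFinite _),
      Set.insert_sdiff_singleton, Set.insert_eq_of_mem he]
  rw [edgeWeight, edgeSet_deleteEdges_sup_edge hne,
    finsum_mem_insert w (fun h => hxy h.1) (Set.toFinite _), hsplit]
  ring

section TstarGraph

variable {G : SimpleGraph V} {w : Sym2 V → ℝ}

lemma tstarGraph_adj {x y : V} :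
    (TstarGraph G w).Adj x y ↔
      G.Adj x y ∧ ¬ (G.lighterSubgraph w (w s(x, y))).Reachable x y := by
  rw [TstarGraph, fromEdgeSet_adj, Set.mem_ofPred_eq, mem_edgeSet]
  constructor
  · exact fun ⟨⟨hxy, h⟩, _⟩ => ⟨hxy, h x y rfl⟩
  · refine fun ⟨hxy, h⟩ => ⟨⟨hxy, fun a b hab => ?_⟩, hxy.ne⟩
    rcases Sym2.eq_iff.1 hab with ⟨rfl, rfl⟩ | ⟨rfl, rfl⟩
    · exact h
    · exact fun hr => h hr.symm

lemma tstarGraph_le : TstarGraph G w ≤ G := fun _ _ h => (tstarGraph_adj.1 h).1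

lemma reachable_tstarGraph_of_adj [Finite V] {x y : V} (hxy : G.Adj x y) :
    (TstarGraph G w).Reachable x y := by
  have wf : WellFounded fun e f : Sym2 V => w e < w f :=
    @Finite.wellFounded_of_trans_of_irrefl _ _ _ ⟨fun _ _ _ => lt_trans⟩
      ⟨fun _ => lt_irrefl _⟩
  induction hs : s(x, y) using wf.induction generalizing x y with
  | _ e ih =>
    subst hs
    by_cases hT : (TstarGraph G w).Adj x y
    · exact hT.reachable
    · have hL : (G.lighterSubgraph w (w s(x, y))).Reachable x y := by
        simpa [tstarGraph_adj, hxy] using hT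
      exact hL.of_forall_adj_reachable fun u v huv =>
        ih _ (lighterSubgraph_adj.1 huv).2 (lighterSubgraph_adj.1 huv).1 rfl

lemma connected_tstarGraph [Finite V] (hG : G.Connected) : (TstarGraph G w).Connected :=
  hG.of_forall_adj_reachable fun _ _ => reachable_tstarGraph_of_adj

lemma isAcyclic_tstarGraph (hw : Set.InjOn w G.edgeSet) : (TstarGraph G w).IsAcyclic := by
  intro u c hc
  obtain ⟨e, he, hmax⟩ := Multiset.exists_max_image w (s := (c.edges : Multiset (Sym2 V)))
    (by simpa [Walk.edges_eq_nil] using hc.not_nil)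
  induction e using Sym2.ind with | _ x y => ?_
  rw [Multiset.mem_coe] at he
  have hGc : ∀ f ∈ c.edges, f ∈ G.edgeSet := fun f hf =>
    edgeSet_mono tstarGraph_le (c.edges_subset_edgeSet hf)
  refine (tstarGraph_adj.1 (c.adj_of_mem_edges he)).2
    (hc.reachable_of_mem_edges he fun f hf hfe => ?_)
  exact mem_edgeSet_lighterSubgraph.2 ⟨hGc f hf,
    (hmax f hf).lt_of_ne fun h => hfe (hw (hGc f hf) (hGc _ he) h)⟩

lemma isSpanningTree_tstarGraph [Finite V] (hG : G.Connected) (hw : Set.InjOn w G.edgeSet) :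
    IsSpanningTree G (TstarGraph G w) :=
  ⟨tstarGraph_le, connected_tstarGraph hG, isAcyclic_tstarGraph hw⟩

lemma IsMST.eq_tstarGraph [Finite V] (hw : Set.InjOn w G.edgeSet)
    (hstar : (TstarGraph G w).IsTree) {T : SimpleGraph V} (hT : IsMST G w T) :
    T = TstarGraph G w := by
  obtain ⟨⟨hTG, hTtree⟩, hmin⟩ := hT
  by_contra hne
  obtain ⟨x, y, hxy, hnxy⟩ : ∃ x y, (TstarGraph G w).Adj x y ∧ ¬ T.Adj x y := by
    by_contra! h
    exact hne (hstar.eq_of_le hTtree h).symm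
  obtain ⟨hGxy, hnreach⟩ := tstarGraph_adj.1 hxy
  obtain ⟨p, hp⟩ := (hTtree.connected.preconnected x y).exists_isPath
  obtain ⟨e, hep, hwe⟩ := p.exists_mem_edges_le_of_not_reachable_lighterSubgraph hTG hnreach
  have heT : e ∈ T.edgeSet := p.edges_subset_edgeSet hep
  have hlt : w s(x, y) < w e := hwe.lt_of_ne fun h =>
    hnxy (by rwa [← mem_edgeSet, hw hGxy (edgeSet_mono hTG heT) h])
  have hexchange := hmin _ ⟨sup_le ((deleteEdges_le _).trans hTG) ((edge_le_iff _).2 (.inr hGxy)),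
    hTtree.deleteEdges_sup_edge_s11 hp hnxy hGxy.ne hep⟩
  linarith [edgeWeight_deleteEdges_sup_edge w heT hnxy hGxy.ne]

end TstarGraph

/-- `T*` is a spanning tree of `G`, and its total weight is strictly less
than that of every other spanning tree. -/
theorem tstar_is_unique_mst [Fintype V] (G : SimpleGraph V) (hG : G.Connected)
    (w : Sym2 V → ℝ) (hw : Set.InjOn w G.edgeSet) :
    IsSpanningTree G (TstarGraph G w) ∧
      ∀ T' : SimpleGraph V, IsSpanningTree G T' → T' ≠ TstarGraph G w →
        edgeWeight w (TstarGraph G w) < edgeWeight w T' := by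
  have hstar := isSpanningTree_tstarGraph hG hw
  obtain ⟨T, hT, hTmin⟩ := Set.exists_min_image {T | IsSpanningTree G T} (edgeWeight w)
    (Set.toFinite _) ⟨_, hstar⟩
  have hTmst : IsMST G w T := ⟨hT, hTmin⟩
  have hmst : IsMST G w (TstarGraph G w) := IsMST.eq_tstarGraph hw hstar.2 hTmst ▸ hTmst
  refine ⟨hstar, fun T' hT' hne => (hmst.2 T' hT').lt_of_ne fun h => hne ?_⟩
  exact IsMST.eq_tstarGraph hw hstar.2 ⟨hT', fun T'' hT'' => h ▸ hmst.2 T'' hT''⟩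
end
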